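/- arXiv:2206.11503 — 5 statements merged into one kernel-verified Lean document; each statement's English description precedes it below -/
import Mathlib

section
/- Let p_1, …, p_n be polynomials in n complex variables whose common zero set Z = p^{−1}(0) ⊂ ℂ^n is finite, and suppose every root is simple, i.e. the Jacobian J_p(w) = det(∂p_j/∂z_k(w)) ≠ 0 for all w ∈ Z. Let h_{jk} be polynomials in 2n variables with p_j(z) − p_j(ζ) = Σ_{k=1}^n (z_k − ζ_k) h_{jk}(z, ζ) for all z, ζ, and write det H(z, w) = det(h_{jk}(z, w)). Then for any prescribed values c_w ∈ ℂ (w ∈ Z), the polynomial f(z) = Σ_{w ∈ Z} c_w · det H(z, w) · (J_p(w))⁻¹ satisfies f(w) = c_w for every w ∈ Z. -/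
open Finset

/-- Multidimensional Lagrange interpolation: if the common zero set `Z` of `p_1, …, p_n` is
finite, every root is simple (`J_p(w) ≠ 0`), and `(h_{jk})` is a Hermite decomposition
matrix, then `f(z) = Σ_{w ∈ Z} c_w · det H(z, w) · (J_p(w))⁻¹` satisfies `f(w) = c_w` for
every `w ∈ Z`. -/
theorem multidim_lagrange_interpolation (n : ℕ) (p : Fin n → MvPolynomial (Fin n) ℂ)
    (Z : Set (Fin n → ℂ)) (hZ : Z = {z | ∀ j, MvPolynomial.eval z (p j) = 0})
    (hZfin : Z.Finite)
    (J : (Fin n → ℂ) → ℂ)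
    (hJ : ∀ w, J w =
      Matrix.det (Matrix.of fun j k => MvPolynomial.eval w (MvPolynomial.pderiv k (p j))))
    (hsimple : ∀ w ∈ Z, J w ≠ 0)
    (h : Fin n → Fin n → MvPolynomial (Fin n ⊕ Fin n) ℂ)
    (hh : ∀ (j : Fin n) (z ζ : Fin n → ℂ),
      MvPolynomial.eval z (p j) - MvPolynomial.eval ζ (p j) =
        ∑ k : Fin n, (z k - ζ k) * MvPolynomial.eval (Sum.elim z ζ) (h j k))
    (c : (Fin n → ℂ) → ℂ)
    (f : MvPolynomial (Fin n) ℂ)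
    (hf : f = ∑ w ∈ hZfin.toFinset,
      MvPolynomial.C (c w * (J w)⁻¹) *
        Matrix.det (Matrix.of fun j k =>
          MvPolynomial.aeval
            (Sum.elim MvPolynomial.X (fun i => MvPolynomial.C (w i))) (h j k))) :
    ∀ w ∈ Z, MvPolynomial.eval w f = c w := by
  classical
  -- the numeric matrix `M z w`
  set M : (Fin n → ℂ) → (Fin n → ℂ) → Matrix (Fin n) (Fin n) ℂ :=
    fun z w => Matrix.of fun j k => MvPolynomial.eval (Sum.elim z w) (h j k) with hM
  -- the Hermite decomposition as a polynomial identity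
  have hpoly : ∀ j : Fin n,
      (MvPolynomial.rename Sum.inl (p j) - MvPolynomial.rename Sum.inr (p j)
        : MvPolynomial (Fin n ⊕ Fin n) ℂ) =
      ∑ k : Fin n,
        (MvPolynomial.X (Sum.inl k) - MvPolynomial.X (Sum.inr k)) * h j k := by
    intro j
    apply MvPolynomial.funext
    intro x
    have hx : Sum.elim (x ∘ Sum.inl) (x ∘ Sum.inr) = x := by
      funext i; cases i <;> rfl
    have := hh j (x ∘ Sum.inl) (x ∘ Sum.inr)
    rw [hx] at this
    simpa [MvPolynomial.eval_rename] using this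
  -- on the diagonal, `M w w` is the Jacobi matrix
  have hdiag : ∀ w : Fin n → ℂ, ∀ j k : Fin n,
      MvPolynomial.eval (Sum.elim w w) (h j k)
        = MvPolynomial.eval w (MvPolynomial.pderiv k (p j)) := by
    intro w j k
    have h1 := congrArg (MvPolynomial.pderiv (Sum.inl k)) (hpoly j)
    have h2 := congrArg (MvPolynomial.eval (Sum.elim w w)) h1
    have hz : MvPolynomial.pderiv (Sum.inl k)
        (MvPolynomial.rename Sum.inr (p j) : MvPolynomial (Fin n ⊕ Fin n) ℂ) = 0 := by
      apply MvPolynomial.pderiv_eq_zero_of_notMem_vars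
      intro hx
      obtain ⟨i, _, hi⟩ := MvPolynomial.mem_vars_rename _ _ hx
      exact Sum.inl_ne_inr hi.symm
    rw [map_sub, hz, sub_zero,
        MvPolynomial.pderiv_rename Sum.inl_injective k (p j), map_sum] at h2
    simp only [map_sum] at h2
    have h3 : ∀ l : Fin n,
        MvPolynomial.eval (Sum.elim w w)
          (MvPolynomial.pderiv (Sum.inl k)
            ((MvPolynomial.X (Sum.inl l) - MvPolynomial.X (Sum.inr l)) * h j l))
        = if k = l then MvPolynomial.eval (Sum.elim w w) (h j l) else 0 := by
      intro l
      rw [MvPolynomial.pderiv_mul]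
      by_cases hkl : k = l
      · subst hkl
        simp [MvPolynomial.pderiv_X, Pi.single_apply]
      · have : (Sum.inl l : Fin n ⊕ Fin n) ≠ Sum.inl k := by
          simp [Ne, Sum.inl.injEq]; exact fun e => hkl e.symm
        simp [MvPolynomial.pderiv_X_of_ne this, hkl]
    rw [Finset.sum_congr rfl (fun l _ => h3 l), Finset.sum_ite_eq Finset.univ k
      (fun l => MvPolynomial.eval (Sum.elim w w) (h j l))] at h2
    simp only [Finset.mem_univ, if_true] at h2
    rw [← h2, MvPolynomial.eval_rename]
    congr 1
  -- off the diagonal, `M z w` is singular for `z, w ∈ Z`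
  have hoff : ∀ z ∈ Z, ∀ w ∈ Z, z ≠ w → (M z w).det = 0 := by
    intro z hz w hw hzw
    rw [← Matrix.exists_mulVec_eq_zero_iff]
    refine ⟨fun k => z k - w k, ?_, ?_⟩
    · intro h0
      apply hzw
      funext k
      have := congrFun h0 k
      simpa [sub_eq_zero] using this
    · funext j
      have := hh j z w
      rw [hZ] at hz hw
      rw [hz j, hw j, sub_self] at this
      simp only [Matrix.mulVec, dotProduct, hM, Matrix.of_apply, Pi.zero_apply]
      have comm : ∀ x : Fin n,
          MvPolynomial.eval (Sum.elim z w) (h j x) * (z x - w x)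
            = (z x - w x) * MvPolynomial.eval (Sum.elim z w) (h j x) :=
        fun x => mul_comm _ _
      simp only [comm]
      exact this.symm
  -- evaluating the polynomial determinant gives `M z w`
  have heval : ∀ z w : Fin n → ℂ,
      MvPolynomial.eval z
        (Matrix.det (Matrix.of fun j k =>
          MvPolynomial.aeval
            (Sum.elim MvPolynomial.X (fun i => MvPolynomial.C (w i))) (h j k)))
      = (M z w).det := by
    intro z w
    rw [RingHom.map_det]
    congr 1
    ext j k
    simp only [RingHom.mapMatrix_apply, Matrix.map_apply, Matrix.of_apply, hM]
    have key := MvPolynomial.aeval_sumElim (R := ℂ) (S := ℂ) (T := ℂ) (h j k) w z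
    have e1 : Sum.elim z ((algebraMap ℂ ℂ) ∘ w) = Sum.elim z w := by
      funext i; cases i <;> simp
    have e2 : (Sum.elim MvPolynomial.X (MvPolynomial.C ∘ w)
        : Fin n ⊕ Fin n → MvPolynomial (Fin n) ℂ)
        = Sum.elim MvPolynomial.X fun i => MvPolynomial.C (w i) := by
      funext i; cases i <;> rfl
    rw [e1, e2] at key
    have aev : ∀ {σ : Type} (v : σ → ℂ) (q : MvPolynomial σ ℂ),
        MvPolynomial.aeval v q = MvPolynomial.eval v q := fun v q => by
      simp [MvPolynomial.aeval_def, MvPolynomial.eval₂_eq_eval_map, MvPolynomial.map_id]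
    rw [← aev, ← aev, ← key]
  intro w hw
  rw [hf, MvPolynomial.eval_sum]
  have hwmem : w ∈ hZfin.toFinset := hZfin.mem_toFinset.mpr hw
  rw [Finset.sum_eq_single w]
  · rw [MvPolynomial.eval_mul, MvPolynomial.eval_C, heval w w]
    have : (M w w).det = J w := by
      rw [hJ w]
      congr 1
      ext j k
      exact hdiag w j k
    rw [this]
    field_simp [hsimple w hw]
  · intro b hb hbw
    rw [MvPolynomial.eval_mul, heval w b, hoff w hw b (hZfin.mem_toFinset.mp hb) hbw.symm,
      mul_zero]
  · intro habs; exact absurd hwmem habs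
end

section
/- Let p_1, …, p_n be polynomials in n complex variables, w, w′ ∈ ℂ^n with w ≠ w′, and d = (d_1, …, d_n), d′ = (d′_1, …, d′_n) vectors of positive integers. Suppose: (a) there are polynomials H_{ik} in n variables with p_i(z) = Σ_{k=1}^n H_{ik}(z) (z_k − w_k)^{d_k} for all z; (b) at w′ the map p satisfies the order conditions with exponent vector d′, i.e. ∂^ℓ p_i(w′) = 0 for all i and all multi-indices ℓ ≤ d′ − I, and det(∂^{d′_k} p_i/∂z_k^{d′_k}(w′))_{i,k} ≠ 0. Then all the corresponding derivatives of det H vanish at w′: ∂^ℓ (det H)(w′) = 0 for every multi-index ℓ ≤ d′ − I. -/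
open Finset

/-- The mixed formal partial derivative `∂^ℓ = ∂^{|ℓ|}/∂z_1^{ℓ_1}⋯∂z_n^{ℓ_n}` of a
multivariate polynomial. -/
noncomputable def mixedPderiv {n : ℕ} (ℓ : Fin n → ℕ)
    (q : MvPolynomial (Fin n) ℂ) : MvPolynomial (Fin n) ℂ :=
  (List.finRange n).foldr (fun k acc => (fun r => MvPolynomial.pderiv k r)^[ℓ k] acc) q

open MvPolynomial

variable {n : ℕ}

lemma iterD_succ' (k : Fin n) (m : ℕ) (q : MvPolynomial (Fin n) ℂ) :
    (fun r => pderiv k r)^[m + 1] q = pderiv k ((fun r => pderiv k r)^[m] q) :=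
  Function.iterate_succ_apply' _ _ _

lemma iterD_add (k : Fin n) (m : ℕ) (a b : MvPolynomial (Fin n) ℂ) :
    (fun r => pderiv k r)^[m] (a + b)
      = (fun r => pderiv k r)^[m] a + (fun r => pderiv k r)^[m] b := by
  induction m with
  | zero => rfl
  | succ m ih => rw [iterD_succ', iterD_succ', iterD_succ', ih, map_add]

lemma iterD_zero (k : Fin n) (m : ℕ) :
    (fun r => pderiv k r)^[m] (0 : MvPolynomial (Fin n) ℂ) = 0 := by
  induction m with
  | zero => rfl
  | succ m ih => rw [iterD_succ', ih, map_zero]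

lemma iterD_smul (k : Fin n) (m : ℕ) (c : ℂ) (a : MvPolynomial (Fin n) ℂ) :
    (fun r => pderiv k r)^[m] (c • a) = c • (fun r => pderiv k r)^[m] a := by
  induction m with
  | zero => rfl
  | succ m ih => rw [iterD_succ', iterD_succ', ih, Derivation.map_smul]

lemma iterD_nsmul (k : Fin n) (m : ℕ) (c : ℕ) (a : MvPolynomial (Fin n) ℂ) :
    (fun r => pderiv k r)^[m] (c • a) = c • (fun r => pderiv k r)^[m] a := by
  induction c with
  | zero => simp only [zero_smul]; exact iterD_zero k m
  | succ c ih => simp only [succ_nsmul, iterD_add, ih]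

lemma iterD_X_mul_ne {k j : Fin n} (h : k ≠ j) (m : ℕ) (q : MvPolynomial (Fin n) ℂ) :
    (fun r => pderiv k r)^[m] (X j * q) = X j * (fun r => pderiv k r)^[m] q := by
  induction m with
  | zero => rfl
  | succ m ih =>
    rw [iterD_succ', iterD_succ', ih, pderiv_mul, pderiv_X_of_ne (Ne.symm h)]
    ring

lemma iterD_X_mul_self (j : Fin n) (m : ℕ) (q : MvPolynomial (Fin n) ℂ) :
    (fun r => pderiv j r)^[m] (X j * q)
      = X j * (fun r => pderiv j r)^[m] q + m • (fun r => pderiv j r)^[m - 1] q := by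
  induction m with
  | zero => simp
  | succ m ih =>
    rw [iterD_succ', ih, map_add, pderiv_mul, pderiv_X_self, map_nsmul,
      ← iterD_succ', Nat.add_sub_cancel]
    have hm : m • pderiv j ((fun r => pderiv j r)^[m - 1] q)
        = m • (fun r => pderiv j r)^[m] q := by
      cases m with
      | zero => simp
      | succ s => rw [Nat.add_sub_cancel, ← iterD_succ']
    rw [hm, succ_nsmul]
    ring

noncomputable def mpd (ℓ : Fin n → ℕ) (L : List (Fin n)) (q : MvPolynomial (Fin n) ℂ) :
    MvPolynomial (Fin n) ℂ :=
  L.foldr (fun k acc => (fun r => MvPolynomial.pderiv k r)^[ℓ k] acc) q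

lemma mpd_cons (ℓ : Fin n → ℕ) (k : Fin n) (T : List (Fin n)) (q : MvPolynomial (Fin n) ℂ) :
    mpd ℓ (k :: T) q = (fun r => pderiv k r)^[ℓ k] (mpd ℓ T q) := rfl

lemma mpd_add (ℓ : Fin n → ℕ) (L : List (Fin n)) (a b : MvPolynomial (Fin n) ℂ) :
    mpd ℓ L (a + b) = mpd ℓ L a + mpd ℓ L b := by
  induction L with
  | nil => rfl
  | cons k T ih => rw [mpd_cons, mpd_cons, mpd_cons, ih, iterD_add]

lemma mpd_zero (ℓ : Fin n → ℕ) (L : List (Fin n)) : mpd ℓ L (0 : MvPolynomial (Fin n) ℂ) = 0 := by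
  induction L with
  | nil => rfl
  | cons k T ih => rw [mpd_cons, ih, iterD_zero]

lemma mpd_smul (ℓ : Fin n → ℕ) (L : List (Fin n)) (c : ℂ) (a : MvPolynomial (Fin n) ℂ) :
    mpd ℓ L (c • a) = c • mpd ℓ L a := by
  induction L with
  | nil => rfl
  | cons k T ih => rw [mpd_cons, mpd_cons, ih, iterD_smul]

lemma mpd_nsmul (ℓ : Fin n → ℕ) (L : List (Fin n)) (c : ℕ) (a : MvPolynomial (Fin n) ℂ) :
    mpd ℓ L (c • a) = c • mpd ℓ L a := by
  induction c with
  | zero => simp only [zero_smul]; exact mpd_zero ℓ L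
  | succ c ih => simp only [succ_nsmul, mpd_add, ih]

lemma mpd_congr {ℓ₁ ℓ₂ : Fin n → ℕ} {L : List (Fin n)} (h : ∀ k ∈ L, ℓ₁ k = ℓ₂ k)
    (q : MvPolynomial (Fin n) ℂ) : mpd ℓ₁ L q = mpd ℓ₂ L q := by
  induction L with
  | nil => rfl
  | cons k T ih =>
    rw [mpd_cons, mpd_cons, ih (fun x hx => h x (List.mem_cons_of_mem _ hx)),
      h k (List.mem_cons_self)]

lemma mpd_X_mul (ℓ : Fin n → ℕ) {L : List (Fin n)} (hL : L.Nodup) (j : Fin n)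
    (q : MvPolynomial (Fin n) ℂ) :
    mpd ℓ L (X j * q) = X j * mpd ℓ L q
      + (if j ∈ L then (ℓ j) • mpd (Function.update ℓ j (ℓ j - 1)) L q else 0) := by
  induction L with
  | nil => simp [mpd]
  | cons k T ih =>
    obtain ⟨hkT, hT⟩ := List.nodup_cons.mp hL
    by_cases hkj : j = k
    · subst hkj
      have hjT : j ∉ T := hkT
      rw [mpd_cons, ih hT, if_neg hjT, add_zero, iterD_X_mul_self, if_pos (List.mem_cons_self)]
      congr 1
      rw [mpd_cons]
      have h1 : Function.update ℓ j (ℓ j - 1) j = ℓ j - 1 := Function.update_self _ _ _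
      have h2 : mpd (Function.update ℓ j (ℓ j - 1)) T q = mpd ℓ T q :=
        mpd_congr (fun x hx => Function.update_of_ne (fun hxj => hjT (by rw [← hxj]; exact hx)) _ _) q
      rw [h1, h2]
    · rw [mpd_cons, ih hT, iterD_add, iterD_X_mul_ne (fun h => hkj h.symm), mpd_cons]
      congr 1
      by_cases hjT : j ∈ T
      · rw [if_pos hjT, if_pos (List.mem_cons_of_mem _ hjT), iterD_nsmul, mpd_cons,
          Function.update_of_ne (fun h => hkj h.symm) _ _]
      · have hnot : j ∉ (k :: T) := by
          intro h
          rcases List.mem_cons.mp h with h1 | h1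
          · exact hkj h1
          · exact hjT h1
        rw [if_neg hjT, if_neg hnot, iterD_zero]

lemma mpd_sub (ℓ : Fin n → ℕ) (L : List (Fin n)) (a b : MvPolynomial (Fin n) ℂ) :
    mpd ℓ L (a - b) = mpd ℓ L a - mpd ℓ L b := by
  have h : a - b = a + (-1 : ℂ) • b := by
    rw [neg_one_smul]; ring
  rw [h, mpd_add, mpd_smul, neg_one_smul]; ring

lemma mixedPderiv_eq (ℓ : Fin n → ℕ) (q : MvPolynomial (Fin n) ℂ) :
    mixedPderiv ℓ q = mpd ℓ (List.finRange n) q := rfl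

/-- The vanishing predicate: all derivatives `∂^ℓ q(w′)` with `ℓ ≤ d′ − I` vanish. -/
def Van (w' : Fin n → ℂ) (d' : Fin n → ℕ) (q : MvPolynomial (Fin n) ℂ) : Prop :=
  ∀ ℓ : Fin n → ℕ, (∀ k, ℓ k ≤ d' k - 1) → MvPolynomial.eval w' (mixedPderiv ℓ q) = 0

variable {w' : Fin n → ℂ} {d' : Fin n → ℕ}

lemma Van_zero : Van w' d' (0 : MvPolynomial (Fin n) ℂ) := by
  intro ℓ _
  rw [mixedPderiv_eq, mpd_zero, map_zero]

lemma Van_add {a b : MvPolynomial (Fin n) ℂ} (ha : Van w' d' a) (hb : Van w' d' b) :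
    Van w' d' (a + b) := by
  intro ℓ hℓ
  rw [mixedPderiv_eq, mpd_add, map_add, ← mixedPderiv_eq, ← mixedPderiv_eq,
    ha ℓ hℓ, hb ℓ hℓ, add_zero]

lemma Van_smul (c : ℂ) {a : MvPolynomial (Fin n) ℂ} (ha : Van w' d' a) :
    Van w' d' (c • a) := by
  intro ℓ hℓ
  rw [mixedPderiv_eq, mpd_smul, smul_eq_C_mul, map_mul, eval_C, ← mixedPderiv_eq,
    ha ℓ hℓ, mul_zero]

lemma update_le {ℓ : Fin n → ℕ} (hℓ : ∀ k, ℓ k ≤ d' k - 1) (j : Fin n) :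
    ∀ k, Function.update ℓ j (ℓ j - 1) k ≤ d' k - 1 := by
  intro k
  by_cases hkj : k = j
  · subst hkj
    rw [Function.update_self]
    exact le_trans (Nat.sub_le _ _) (hℓ k)
  · rw [Function.update_of_ne hkj]
    exact hℓ k

lemma Van_X_mul (j : Fin n) {q : MvPolynomial (Fin n) ℂ} (hq : Van w' d' q) :
    Van w' d' (X j * q) := by
  intro ℓ hℓ
  rw [mixedPderiv_eq, mpd_X_mul ℓ (List.nodup_finRange n) j,
    if_pos (List.mem_finRange j), map_add, map_mul, eval_X, map_nsmul,
    ← mixedPderiv_eq, ← mixedPderiv_eq, hq ℓ hℓ,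
    hq _ (update_le hℓ j), mul_zero, smul_zero, add_zero]

lemma Van_mul (r : MvPolynomial (Fin n) ℂ) :
    ∀ q : MvPolynomial (Fin n) ℂ, Van w' d' q → Van w' d' (r * q) := by
  induction r using MvPolynomial.induction_on with
  | C a =>
    intro q hq
    rw [← smul_eq_C_mul]
    exact Van_smul a hq
  | add r1 r2 ih1 ih2 =>
    intro q hq
    rw [add_mul]
    exact Van_add (ih1 q hq) (ih2 q hq)
  | mul_X r j ih =>
    intro q hq
    rw [mul_assoc]
    exact ih _ (Van_X_mul j hq)

lemma Van_sum {ι : Type*} (s : Finset ι) (f : ι → MvPolynomial (Fin n) ℂ)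
    (h : ∀ i ∈ s, Van w' d' (f i)) : Van w' d' (∑ i ∈ s, f i) := by
  classical
  induction s using Finset.induction_on with
  | empty => simpa using Van_zero
  | @insert x s hx ih =>
    rw [Finset.sum_insert hx]
    exact Van_add (h _ (Finset.mem_insert_self _ _))
      (ih fun i hi => h i (Finset.mem_insert_of_mem hi))

lemma Van_cancel_linear {j : Fin n} {a : ℂ} (ha : w' j ≠ a)
    {q : MvPolynomial (Fin n) ℂ} (h : Van w' d' (q * (X j - C a))) : Van w' d' q := by
  have key : ∀ ℓ : Fin n → ℕ, (∀ k, ℓ k ≤ d' k - 1) →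
      (w' j - a) * MvPolynomial.eval w' (mixedPderiv ℓ q)
        + (ℓ j : ℂ) * MvPolynomial.eval w'
            (mixedPderiv (Function.update ℓ j (ℓ j - 1)) q) = 0 := by
    intro ℓ hℓ
    have h0 := h ℓ hℓ
    have hrw : q * (X j - C a) = X j * q - a • q := by
      rw [smul_eq_C_mul]; ring
    rw [hrw, mixedPderiv_eq, mpd_sub, mpd_smul, ← mixedPderiv_eq,
      mixedPderiv_eq (q := X j * q), mpd_X_mul ℓ (List.nodup_finRange n) j,
      if_pos (List.mem_finRange j), map_sub, map_add, map_mul, eval_X, map_nsmul,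
      smul_eq_C_mul, map_mul, eval_C, ← mixedPderiv_eq, ← mixedPderiv_eq] at h0
    rw [← h0]
    push_cast
    ring
  suffices hm : ∀ m : ℕ, ∀ ℓ : Fin n → ℕ, (∀ k, ℓ k ≤ d' k - 1) → ℓ j = m →
      MvPolynomial.eval w' (mixedPderiv ℓ q) = 0 by
    intro ℓ hℓ
    exact hm (ℓ j) ℓ hℓ rfl
  intro m
  induction m with
  | zero =>
    intro ℓ hℓ hj
    have := key ℓ hℓ
    rw [hj] at this
    push_cast at this
    rw [zero_mul, add_zero, mul_eq_zero] at this
    rcases this with h1 | h1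
    · exact absurd (sub_eq_zero.mp h1) ha
    · exact h1
  | succ m ih =>
    intro ℓ hℓ hj
    have hupd : Function.update ℓ j (ℓ j - 1) j = m := by
      rw [Function.update_self, hj]; omega
    have h2 := ih (Function.update ℓ j (ℓ j - 1)) (update_le hℓ j) hupd
    have := key ℓ hℓ
    rw [h2, mul_zero, add_zero, mul_eq_zero] at this
    rcases this with h1 | h1
    · exact absurd (sub_eq_zero.mp h1) ha
    · exact h1

lemma Van_cancel_pow {j : Fin n} {a : ℂ} (ha : w' j ≠ a) (m : ℕ)
    {q : MvPolynomial (Fin n) ℂ} (h : Van w' d' (q * (X j - C a) ^ m)) : Van w' d' q := by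
  induction m generalizing q with
  | zero => simpa using h
  | succ m ih =>
    rw [pow_succ, ← mul_assoc] at h
    exact ih (Van_cancel_linear ha h)

/-- If `p_i(z) = Σ_k H_{ik}(z)(z_k − w_k)^{d_k}` and at another point `w′ ≠ w` the map `p`
satisfies the order conditions with exponent vector `d′` (all derivatives `∂^ℓ p_i(w′)` with
`ℓ ≤ d′ − I` vanish and `det(∂^{d′_k} p_i/∂z_k^{d′_k}(w′)) ≠ 0`), then all the corresponding
derivatives of `det H` vanish at `w′`: `∂^ℓ(det H)(w′) = 0` for every `ℓ ≤ d′ − I`. -/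
theorem derivatives_of_detH_vanish_at_other_root (n : ℕ)
    (p : Fin n → MvPolynomial (Fin n) ℂ)
    (w w' : Fin n → ℂ) (hne : w ≠ w')
    (d d' : Fin n → ℕ) (hd : ∀ k, 1 ≤ d k) (hd' : ∀ k, 1 ≤ d' k)
    (H : Fin n → Fin n → MvPolynomial (Fin n) ℂ)
    (hH : ∀ i, p i = ∑ k : Fin n,
      H i k * (MvPolynomial.X k - MvPolynomial.C (w k)) ^ d k)
    (horder : ∀ i, ∀ ℓ : Fin n → ℕ, (∀ k, ℓ k ≤ d' k - 1) →
      MvPolynomial.eval w' (mixedPderiv ℓ (p i)) = 0)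
    (hnondeg : Matrix.det (Matrix.of fun i k =>
      MvPolynomial.eval w' ((fun r => MvPolynomial.pderiv k r)^[d' k] (p i))) ≠ 0) :
    ∀ ℓ : Fin n → ℕ, (∀ k, ℓ k ≤ d' k - 1) →
      MvPolynomial.eval w' (mixedPderiv ℓ (Matrix.det (Matrix.of H))) = 0 := by
  obtain ⟨j, hj⟩ := Function.ne_iff.mp hne
  set A : Matrix (Fin n) (Fin n) (MvPolynomial (Fin n) ℂ) := Matrix.of H with hA
  set v : Fin n → MvPolynomial (Fin n) ℂ :=
    fun k => (X k - C (w k)) ^ d k with hv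
  have hp : p = A.mulVec v := by
    funext i
    rw [hH i]
    simp [Matrix.mulVec, dotProduct, hA, hv, Matrix.of_apply]
  have key : A.det * v j = ∑ i : Fin n, A.adjugate j i * p i := by
    have e1 : (A.adjugate).mulVec p = A.det • v := by
      rw [hp, Matrix.mulVec_mulVec, Matrix.adjugate_mul, Matrix.smul_mulVec,
        Matrix.one_mulVec]
    have e2 := congrFun e1 j
    simpa [Matrix.mulVec, dotProduct, Pi.smul_apply, smul_eq_mul] using e2.symm
  have hvan : Van w' d' (A.det * v j) := by
    rw [key]
    exact Van_sum _ _ fun i _ => Van_mul _ _ (horder i)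
  have hfinal : Van w' d' A.det := Van_cancel_pow (Ne.symm hj) (d j) hvan
  intro ℓ hℓ
  exact hfinal ℓ hℓ
end

section
/- Let P_1, …, P_n be formal power series in n variables over ℂ and d = (d_1, …, d_n) a vector of positive integers. Assume: (1) the coefficient of X^β in P_i vanishes for every i and every multi-index β with β_k ≤ d_k − 1 for all k; (2) the n × n matrix M with entries M_{ik} = (coefficient of X_k^{d_k} in P_i) has det M ≠ 0. Then the ideals generated in ℂ[[X_1, …, X_n]] coincide: ⟨P_1, …, P_n⟩ = ⟨X_1^{d_1}, …, X_n^{d_n}⟩. -/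
open MvPowerSeries Finsupp

noncomputable section

variable {n : ℕ}

/-- Auxiliary quotient series: `Qaux d f k` collects the monomials of `f` whose first
index `k` with exponent `≥ d k` is `k`, shifted down by `X_k^{d_k}`. -/
def Qaux (d : Fin n → ℕ) (f : MvPowerSeries (Fin n) ℂ) (k : Fin n) :
    MvPowerSeries (Fin n) ℂ :=
  fun β => if ∀ j, j < k → β j < d j then f (β + Finsupp.single k (d k)) else 0

lemma coeff_Qaux (d : Fin n → ℕ) (f : MvPowerSeries (Fin n) ℂ) (k : Fin n)
    (β : Fin n →₀ ℕ) :
    MvPowerSeries.coeff β (Qaux d f k) =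
      if ∀ j, j < k → β j < d j then
        MvPowerSeries.coeff (β + Finsupp.single k (d k)) f else 0 := by
  simp only [MvPowerSeries.coeff_apply, Qaux]

lemma decomp (d : Fin n → ℕ) (hd : ∀ k, 1 ≤ d k) (f : MvPowerSeries (Fin n) ℂ)
    (hf : ∀ β : Fin n →₀ ℕ, (∀ k, β k ≤ d k - 1) → MvPowerSeries.coeff β f = 0) :
    f = ∑ k : Fin n, (MvPowerSeries.X k : MvPowerSeries (Fin n) ℂ) ^ d k * Qaux d f k := by
  ext β
  rw [map_sum]
  have hterm : ∀ k : Fin n,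
      MvPowerSeries.coeff β ((MvPowerSeries.X k : MvPowerSeries (Fin n) ℂ) ^ d k
        * Qaux d f k) =
      if d k ≤ β k ∧ ∀ j, j < k → β j < d j then MvPowerSeries.coeff β f else 0 := by
    intro k
    rw [MvPowerSeries.X_pow_eq, MvPowerSeries.coeff_monomial_mul]
    have hle : Finsupp.single k (d k) ≤ β ↔ d k ≤ β k := by
      constructor
      · intro h; simpa using h k
      · intro h j
        rcases eq_or_ne j k with rfl | hjk
        · simpa using h
        · simp [Finsupp.single_apply, hjk.symm]
    by_cases h1 : d k ≤ β k
    · rw [if_pos (hle.2 h1)]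
      rw [coeff_Qaux]
      have hsub : ∀ j, j ≠ k → (β - Finsupp.single k (d k)) j = β j := by
        intro j hj
        simp [Finsupp.tsub_apply, Finsupp.single_apply, hj.symm]
      have hrec : β - Finsupp.single k (d k) + Finsupp.single k (d k) = β := by
        ext j
        rcases eq_or_ne j k with rfl | hj
        · simp [Finsupp.tsub_apply, Nat.sub_add_cancel h1]
        · simp [hsub j hj, Finsupp.single_apply, hj.symm]
      by_cases h2 : ∀ j, j < k → β j < d j
      · rw [if_pos, hrec, one_mul, if_pos ⟨h1, h2⟩]
        intro j hj
        rw [hsub j (ne_of_lt hj)]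
        exact h2 j hj
      · rw [if_neg, mul_zero, if_neg]
        · rintro ⟨-, h2'⟩; exact h2 h2'
        · intro h2'
          apply h2
          intro j hj
          have := h2' j hj
          rwa [hsub j (ne_of_lt hj)] at this
    · rw [if_neg (fun h => h1 (hle.1 h)), if_neg (fun h => h1 h.1)]
  simp only [hterm]
  by_cases hβ : ∃ k, d k ≤ β k
  · -- exactly one k satisfies the condition: the minimal one
    classical
    set S : Finset (Fin n) := Finset.univ.filter (fun k => d k ≤ β k) with hS
    have hSne : S.Nonempty := by
      obtain ⟨k, hk⟩ := hβ
      exact ⟨k, by simp [hS, hk]⟩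
    set k₀ := S.min' hSne with hk₀
    have hk₀S : k₀ ∈ S := S.min'_mem hSne
    have hk₀d : d k₀ ≤ β k₀ := by simpa [hS] using hk₀S
    have hk₀min : ∀ j, j < k₀ → β j < d j := by
      intro j hj
      by_contra h
      push_neg at h
      have : j ∈ S := by simp [hS, h]
      exact absurd (S.min'_le j this) (not_le.2 hj)
    rw [Finset.sum_eq_single k₀]
    · rw [if_pos ⟨hk₀d, hk₀min⟩]
    · intro k _ hk
      rw [if_neg]
      rintro ⟨h1, h2⟩
      rcases lt_or_gt_of_ne hk with h | h
      · exact absurd h1 (not_le.2 (hk₀min k h))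
      · exact absurd hk₀d (not_le.2 (h2 k₀ h))
    · intro h; exact absurd (Finset.mem_univ k₀) h
  · push_neg at hβ
    have : MvPowerSeries.coeff β f = 0 := by
      apply hf
      intro k
      exact Nat.le_sub_one_of_lt (hβ k)
    rw [this]
    symm
    apply Finset.sum_eq_zero
    intro k _
    rw [if_neg]
    rintro ⟨h1, -⟩
    exact absurd h1 (not_le.2 (hβ k))

/-- Lemma 2.1 of the paper in the formal completion: if every coefficient of `P_i` on the
parallelepiped `{β : β_k ≤ d_k − 1 ∀k}` vanishes and the matrix of coefficients of
`X_k^{d_k}` in `P_i` is nondegenerate, then `⟨P_1, …, P_n⟩ = ⟨X_1^{d_1}, …, X_n^{d_n}⟩` in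
`ℂ[[X_1, …, X_n]]`. -/
theorem local_ideal_eq_monomial_ideal (n : ℕ) (P : Fin n → MvPowerSeries (Fin n) ℂ)
    (d : Fin n → ℕ) (hd : ∀ k, 1 ≤ d k)
    (h1 : ∀ i, ∀ β : Fin n →₀ ℕ, (∀ k, β k ≤ d k - 1) →
      MvPowerSeries.coeff β (P i) = 0)
    (h2 : Matrix.det (Matrix.of fun i k =>
      MvPowerSeries.coeff (Finsupp.single k (d k)) (P i)) ≠ 0) :
    Ideal.span (Set.range P) =
      Ideal.span (Set.range fun k =>
        (MvPowerSeries.X k : MvPowerSeries (Fin n) ℂ) ^ d k) := by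
  classical
  set Qm : Matrix (Fin n) (Fin n) (MvPowerSeries (Fin n) ℂ) :=
    Matrix.of (fun i k => Qaux d (P i) k) with hQm
  have hPdecomp : ∀ i, P i = ∑ k : Fin n,
      (MvPowerSeries.X k : MvPowerSeries (Fin n) ℂ) ^ d k * Qm i k := by
    intro i
    exact decomp d hd (P i) (h1 i)
  -- constant coefficient of Qm i k is the matrix entry
  have hconst : ∀ i k, MvPowerSeries.constantCoeff (Qm i k) =
      MvPowerSeries.coeff (Finsupp.single k (d k)) (P i) := by
    intro i k
    have : MvPowerSeries.constantCoeff (Qm i k) =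
        MvPowerSeries.coeff (0 : Fin n →₀ ℕ) (Qm i k) := rfl
    rw [this, hQm]
    simp only [Matrix.of_apply, coeff_Qaux]
    rw [if_pos, zero_add]
    intro j hj
    simpa using Nat.lt_of_lt_of_le Nat.zero_lt_one (hd j)
  -- det Qm is a unit
  have hdet : IsUnit Qm.det := by
    rw [MvPowerSeries.isUnit_iff_constantCoeff]
    rw [RingHom.map_det, RingHom.mapMatrix_apply]
    have : Qm.map (MvPowerSeries.constantCoeff) =
        Matrix.of fun i k => MvPowerSeries.coeff (Finsupp.single k (d k)) (P i) := by
      ext i k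
      simp [Matrix.map_apply, hconst i k]
    rw [this]
    exact isUnit_iff_ne_zero.2 h2
  apply le_antisymm
  · rw [Ideal.span_le]
    rintro _ ⟨i, rfl⟩
    rw [hPdecomp i]
    apply Ideal.sum_mem
    intro k _
    rw [mul_comm]
    exact Ideal.mul_mem_left _ _ (Ideal.subset_span ⟨k, rfl⟩)
  · rw [Ideal.span_le]
    rintro _ ⟨k, rfl⟩
    -- X k ^ d k = ∑ i, Qm⁻¹ k i * P i
    have hvec : P = Qm.mulVec (fun k =>
        (MvPowerSeries.X k : MvPowerSeries (Fin n) ℂ) ^ d k) := by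
      funext i
      rw [hPdecomp i]
      simp only [Matrix.mulVec, dotProduct]
      exact Finset.sum_congr rfl fun k _ => mul_comm _ _
    have hX : (fun k => (MvPowerSeries.X k : MvPowerSeries (Fin n) ℂ) ^ d k) =
        Qm⁻¹.mulVec P := by
      rw [hvec, Matrix.mulVec_mulVec, Matrix.nonsing_inv_mul _ hdet, Matrix.one_mulVec]
    have hXk : (MvPowerSeries.X k : MvPowerSeries (Fin n) ℂ) ^ d k =
        ∑ i : Fin n, Qm⁻¹ k i * P i := congrFun hX k
    show (MvPowerSeries.X k : MvPowerSeries (Fin n) ℂ) ^ d k ∈ _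
    rw [hXk]
    exact Ideal.sum_mem _ fun i _ =>
      Ideal.mul_mem_left _ _ (Ideal.subset_span ⟨i, rfl⟩)

end
end

section
/- Let p be a polynomial in n complex variables, w ∈ ℂ^n, d = (d_1, …, d_n) a vector of positive integers, and h_1, …, h_n polynomials with p(z) = Σ_{k=1}^n h_k(z)(z_k − w_k)^{d_k} for all z. If ∂^ℓ p(w) = 0 for every multi-index ℓ ≤ d − I, then for each k the value of h_k at w is determined: h_k(w) = (1/d_k!) · ∂^{d_k} p/∂z_k^{d_k}(w). Consequently, if p_1, …, p_n satisfy these order conditions at w together with det(∂^{d_k} p_i/∂z_k^{d_k}(w))_{i,k} ≠ 0, then any decomposition matrix H = (H_{ik}) with p_i(z) = Σ_k H_{ik}(z)(z_k − w_k)^{d_k} satisfies det (H_{ik}(w)) ≠ 0. -/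
open Finset

private lemma iter_pderiv_sum {n : ℕ} (k : Fin n) (m : ℕ) {α : Type*} (s : Finset α)
    (t : α → MvPolynomial (Fin n) ℂ) :
    (fun r => MvPolynomial.pderiv k r)^[m] (∑ j ∈ s, t j)
      = ∑ j ∈ s, (fun r => MvPolynomial.pderiv k r)^[m] (t j) := by
  induction m with
  | zero => simp
  | succ m ih =>
      rw [Function.iterate_succ_apply', ih, map_sum]
      simp [Function.iterate_succ_apply']

private lemma lemA {n : ℕ} (k j : Fin n) (hjk : j ≠ k) (w : Fin n → ℂ) (D m : ℕ)
    (hD : 1 ≤ D) (A : MvPolynomial (Fin n) ℂ) :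
    MvPolynomial.eval w ((fun r => MvPolynomial.pderiv k r)^[m]
      (A * (MvPolynomial.X j - MvPolynomial.C (w j)) ^ D)) = 0 := by
  set g : MvPolynomial (Fin n) ℂ := (MvPolynomial.X j - MvPolynomial.C (w j)) ^ D with hgdef
  have hg : MvPolynomial.pderiv k g = 0 := by
    have h1 : MvPolynomial.pderiv k (MvPolynomial.X j - MvPolynomial.C (w j))
        = (0 : MvPolynomial (Fin n) ℂ) := by
      simp [MvPolynomial.pderiv_X, Pi.single_eq_of_ne hjk]
    rw [hgdef, Derivation.leibniz_pow, h1]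
    simp
  have key : ∀ (B : MvPolynomial (Fin n) ℂ),
      (fun r => MvPolynomial.pderiv k r)^[m] (B * g)
        = ((fun r => MvPolynomial.pderiv k r)^[m] B) * g := by
    induction m with
    | zero => simp
    | succ m ih =>
        intro B
        rw [Function.iterate_succ_apply, Derivation.leibniz, hg, smul_zero, zero_add,
          smul_eq_mul, mul_comm g, ih, Function.iterate_succ_apply]
  rw [key A, map_mul]
  have : MvPolynomial.eval w g = 0 := by
    simp [hgdef, zero_pow (Nat.one_le_iff_ne_zero.mp hD)]
  rw [this, mul_zero]

private lemma lemB {n : ℕ} (k : Fin n) (w : Fin n → ℂ) :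
    ∀ (D : ℕ) (A : MvPolynomial (Fin n) ℂ),
    MvPolynomial.eval w ((fun r => MvPolynomial.pderiv k r)^[D]
      (A * (MvPolynomial.X k - MvPolynomial.C (w k)) ^ D))
      = (D.factorial : ℂ) * MvPolynomial.eval w A := by
  intro D
  induction D with
  | zero => intro A; simp
  | succ D ih =>
      intro A
      set g : MvPolynomial (Fin n) ℂ := MvPolynomial.X k - MvPolynomial.C (w k) with hgdef
      have hg : MvPolynomial.pderiv k g = 1 := by
        simp [hgdef]
      have step : MvPolynomial.pderiv k (A * g ^ (D + 1))
          = (MvPolynomial.pderiv k A * g + ((D : MvPolynomial (Fin n) ℂ) + 1) * A) * g ^ D := by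
        rw [Derivation.leibniz, Derivation.leibniz_pow, hg, smul_eq_mul, smul_eq_mul,
          smul_eq_mul, nsmul_eq_mul]
        push_cast
        ring
      rw [Function.iterate_succ_apply, step, ih]
      simp only [map_add, map_mul, map_sub, map_one, map_natCast, MvPolynomial.eval_X, MvPolynomial.eval_C]
      push_cast [Nat.factorial_succ]
      have : MvPolynomial.eval w g = 0 := by simp [hgdef]
      rw [this]
      ring

private lemma keyval {n : ℕ}
    (p : Fin n → MvPolynomial (Fin n) ℂ)
    (w : Fin n → ℂ) (d : Fin n → ℕ) (hd : ∀ k, 1 ≤ d k)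
    (H : Fin n → Fin n → MvPolynomial (Fin n) ℂ)
    (hH : ∀ i, p i = ∑ k : Fin n,
      H i k * (MvPolynomial.X k - MvPolynomial.C (w k)) ^ d k) (i k : Fin n) :
    MvPolynomial.eval w ((fun r => MvPolynomial.pderiv k r)^[d k] (p i))
      = ((d k).factorial : ℂ) * MvPolynomial.eval w (H i k) := by
  rw [hH i, iter_pderiv_sum, map_sum, Finset.sum_eq_single k]
  · exact lemB k w (d k) (H i k)
  · intro j _ hj
    exact lemA k j hj w (d j) (d k) (hd j) (H i j)
  · intro h; exact absurd (Finset.mem_univ k) h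

/-- If `p_i(z) = Σ_k H_{ik}(z)(z_k − w_k)^{d_k}` and each `p_i` satisfies the order
conditions `∂^ℓ p_i(w) = 0` for `ℓ ≤ d − I`, then `H_{ik}(w) = (1/d_k!)·∂^{d_k}p_i/∂z_k^{d_k}(w)`;
consequently, if `det(∂^{d_k}p_i/∂z_k^{d_k}(w)) ≠ 0`, then `det(H_{ik}(w)) ≠ 0`. -/
theorem decomposition_matrix_value_at_root (n : ℕ)
    (p : Fin n → MvPolynomial (Fin n) ℂ)
    (w : Fin n → ℂ) (d : Fin n → ℕ) (hd : ∀ k, 1 ≤ d k)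
    (H : Fin n → Fin n → MvPolynomial (Fin n) ℂ)
    (hH : ∀ i, p i = ∑ k : Fin n,
      H i k * (MvPolynomial.X k - MvPolynomial.C (w k)) ^ d k)
    (horder : ∀ i, ∀ ℓ : Fin n → ℕ, (∀ k, ℓ k ≤ d k - 1) →
      MvPolynomial.eval w (mixedPderiv ℓ (p i)) = 0) :
    (∀ i k, MvPolynomial.eval w (H i k) =
        (((d k).factorial : ℂ))⁻¹ *
          MvPolynomial.eval w ((fun r => MvPolynomial.pderiv k r)^[d k] (p i))) ∧
      (Matrix.det (Matrix.of fun i k =>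
          MvPolynomial.eval w ((fun r => MvPolynomial.pderiv k r)^[d k] (p i))) ≠ 0 →
        Matrix.det (Matrix.of fun i k => MvPolynomial.eval w (H i k)) ≠ 0) := by
  have key := keyval p w d hd H hH
  have hfac : ∀ k : Fin n, ((d k).factorial : ℂ) ≠ 0 := fun k =>
    Nat.cast_ne_zero.mpr (Nat.factorial_ne_zero _)
  constructor
  · intro i k
    rw [key i k, inv_mul_cancel_left₀ (hfac k)]
  · intro hdet
    have hM : (Matrix.of fun i k =>
        MvPolynomial.eval w ((fun r => MvPolynomial.pderiv k r)^[d k] (p i)))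
        = Matrix.of fun i k => ((d k).factorial : ℂ) *
            (Matrix.of fun i k => MvPolynomial.eval w (H i k)) i k := by
      ext i k
      simp [key i k]
    rw [hM, Matrix.det_mul_row] at hdet
    exact right_ne_zero_of_mul hdet
end

section
/- Let d = (d_1, …, d_n) be a vector of positive integers and g_1, …, g_n polynomials in n complex variables such that every monomial X^β occurring in any g_i satisfies both Σ_{k=1}^n β_k/d_k > 1 and β_k ≥ d_k for at least one k. Set P_i(z) = z_i^{d_i} + g_i(z). Then there exists r_0 > 0 such that for all 0 < r < r_0: (a) P_i(z(θ)) ≠ 0 for all θ ∈ [0, 2π]^n and all i, where z(θ) = (r^{1/d_1} e^{iθ_1}, …, r^{1/d_n} e^{iθ_n}); and (b) the torus integral vanishes: ∫_{[0,2π]^n} z(θ)_1^{d_1} · (Π_{k=1}^n z(θ)_k) / (P_1(z(θ)) ⋯ P_n(z(θ))) dθ = 0. -/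
open Finset Real MeasureTheory

/-- The point `z(θ) = (r^{1/d_1} e^{iθ_1}, …, r^{1/d_n} e^{iθ_n})` of the torus
`{|z_k| = r^{1/d_k}}`. -/
noncomputable def torusPt {n : ℕ} (d : Fin n → ℕ) (r : ℝ) (θ : Fin n → ℝ) :
    Fin n → ℂ :=
  fun k => ((r ^ ((d k : ℝ)⁻¹) : ℝ) : ℂ) * Complex.exp (Complex.I * θ k)

namespace ResidueAux

lemma integral_exp_int_Icc (a : ℤ) (ha : a ≠ 0) :
    ∫ t in Set.Icc (0:ℝ) (2*π), Complex.exp (Complex.I * a * t) = 0 := by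
  rw [MeasureTheory.integral_Icc_eq_integral_Ioc,
    ← intervalIntegral.integral_of_le (by positivity : (0:ℝ) ≤ 2*π)]
  have h : (Complex.I * (a:ℂ)) ≠ 0 := by
    apply mul_ne_zero Complex.I_ne_zero
    exact_mod_cast ha
  have hInt := integral_exp_mul_complex (a := (0:ℝ)) (b := 2*π) h
  have h1 : Complex.exp (Complex.I * (a:ℂ) * ((2*π:ℝ):ℂ)) = 1 := by
    have he : Complex.I * (a:ℂ) * ((2*π:ℝ):ℂ) = (a:ℤ) * (2 * π * Complex.I) := by
      push_cast; ring
    rw [he, Complex.exp_int_mul_two_pi_mul_I]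
  simp only [mul_assoc] at hInt h1 ⊢
  rw [hInt, h1]
  simp

lemma integral_prod_exp_eq_zero {n : ℕ} (a : Fin n → ℤ) (c : Fin n → ℂ)
    (k₀ : Fin n) (ha : a k₀ ≠ 0) :
    ∫ θ : Fin n → ℝ in Set.Icc (0 : Fin n → ℝ) (fun _ => 2*π),
      ∏ k, (c k * Complex.exp (Complex.I * a k * θ k)) = 0 := by
  have hIcc : Set.Icc (0 : Fin n → ℝ) (fun _ => 2*π)
      = Set.pi Set.univ (fun _ => Set.Icc (0:ℝ) (2*π)) := (Set.pi_univ_Icc _ _).symm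
  rw [← MeasureTheory.integral_indicator measurableSet_Icc]
  have hind : ∀ θ : Fin n → ℝ, (Set.Icc (0:Fin n→ℝ) (fun _ => 2*π)).indicator
      (fun θ => ∏ k, (c k * Complex.exp (Complex.I * a k * θ k))) θ
      = ∏ k, (Set.Icc (0:ℝ) (2*π)).indicator
          (fun t => c k * Complex.exp (Complex.I * a k * t)) (θ k) := by
    intro θ
    by_cases h : θ ∈ Set.Icc (0:Fin n→ℝ) (fun _ => 2*π)
    · rw [Set.indicator_of_mem h]
      rw [hIcc] at h
      refine Finset.prod_congr rfl fun k _ => ?_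
      have hk : θ k ∈ Set.Icc (0:ℝ) (2*π) := h k (Set.mem_univ k)
      exact (Set.indicator_of_mem hk (fun t => c k * Complex.exp (Complex.I * a k * t))).symm
    · rw [Set.indicator_of_notMem h]
      rw [hIcc, Set.mem_univ_pi] at h
      push_neg at h
      obtain ⟨k, hk⟩ := h
      have hk' : θ k ∉ Set.Icc (0:ℝ) (2*π) := hk
      exact (Finset.prod_eq_zero (Finset.mem_univ k) (Set.indicator_of_notMem hk' (fun t => c k * Complex.exp (Complex.I * a k * t)))).symm
  simp_rw [hind]
  rw [MeasureTheory.integral_fintype_prod_volume_eq_prod (ι := Fin n)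
    (f := fun k t => (Set.Icc (0:ℝ) (2*π)).indicator
      (fun t => c k * Complex.exp (Complex.I * a k * t)) t)]
  apply Finset.prod_eq_zero (Finset.mem_univ k₀)
  rw [MeasureTheory.integral_indicator measurableSet_Icc,
    MeasureTheory.integral_const_mul, integral_exp_int_Icc _ ha, mul_zero]


/-- `Good d L p`: every exponent in the support of `p` dominates a sum of `L`
of the basic exponents `d k • e_k` (with multiplicities `c`). -/
def Good {n : ℕ} (d : Fin n → ℕ) (L : ℕ) (p : MvPolynomial (Fin n) ℂ) : Prop :=
  ∀ β ∈ p.support, ∃ c : Fin n → ℕ, (∑ k, c k = L) ∧ ∀ k, c k * d k ≤ β k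

lemma good_one {n : ℕ} (d : Fin n → ℕ) : Good d 0 1 := by
  intro β hβ
  refine ⟨0, by simp, ?_⟩
  intro k; simp

lemma good_mul {n : ℕ} {d : Fin n → ℕ} {L L' : ℕ} {p q : MvPolynomial (Fin n) ℂ}
    (hp : Good d L p) (hq : Good d L' q) : Good d (L + L') (p * q) := by
  intro β hβ
  have := MvPolynomial.support_mul p q hβ
  rw [Finset.mem_add] at this
  obtain ⟨β₁, hβ₁, β₂, hβ₂, hadd⟩ := this
  obtain ⟨c₁, hc₁, hc₁'⟩ := hp β₁ hβ₁
  obtain ⟨c₂, hc₂, hc₂'⟩ := hq β₂ hβ₂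
  refine ⟨c₁ + c₂, by rw [← hc₁, ← hc₂, ← Finset.sum_add_distrib]; rfl, ?_⟩
  intro k
  have : β k = β₁ k + β₂ k := by rw [← hadd]; simp
  rw [this]
  calc (c₁ + c₂) k * d k = c₁ k * d k + c₂ k * d k := by simp [add_mul]
    _ ≤ β₁ k + β₂ k := add_le_add (hc₁' k) (hc₂' k)

lemma good_pow {n : ℕ} {d : Fin n → ℕ} {p : MvPolynomial (Fin n) ℂ}
    (hp : Good d 1 p) : ∀ m : ℕ, Good d m (p ^ m) := by
  intro m
  induction m with
  | zero => simpa using good_one d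
  | succ m ih =>
      have := good_mul ih hp
      simpa [pow_succ] using this

lemma good_neg {n : ℕ} {d : Fin n → ℕ} {L : ℕ} {p : MvPolynomial (Fin n) ℂ}
    (hp : Good d L p) : Good d L (-p) := by
  intro β hβ
  exact hp β (by simpa using hβ)

lemma good_single {n : ℕ} {d : Fin n → ℕ} {p : MvPolynomial (Fin n) ℂ}
    (hp : ∀ β ∈ p.support, ∃ k, d k ≤ β k) : Good d 1 p := by
  intro β hβ
  obtain ⟨k, hk⟩ := hp β hβ
  refine ⟨fun k' => if k' = k then 1 else 0, by simp, ?_⟩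
  intro k'
  by_cases h : k' = k
  · subst h; simpa using hk
  · simp [h]

lemma good_prod {n : ℕ} {d : Fin n → ℕ} (g : Fin n → MvPolynomial (Fin n) ℂ)
    (hg : ∀ i, ∀ β ∈ (g i).support, ∃ k, d k ≤ β k) (m : Fin n → ℕ) :
    Good d (∑ i, m i) (∏ i, (-(g i)) ^ (m i)) := by
  have key : ∀ s : Finset (Fin n),
      Good d (∑ i ∈ s, m i) (∏ i ∈ s, (-(g i)) ^ (m i)) := by
    intro s
    induction s using Finset.induction_on with
    | empty => simpa using good_one d
    | @insert a s ha ih =>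
        rw [Finset.sum_insert ha, Finset.prod_insert ha]
        exact good_mul (good_pow (good_neg (good_single (hg a))) (m a)) ih
  exact key Finset.univ

/-- The counting argument: if all exponents `a k` vanish we get `∑ c ≤ ∑ m - 1`,
contradiction. -/
lemma exists_exp_ne_zero {n : ℕ} (k₀ : Fin n) (d : Fin n → ℕ) (hd : ∀ k, 1 ≤ d k)
    (m : Fin n → ℕ) (β : Fin n →₀ ℕ) (c : Fin n → ℕ)
    (hc : ∑ k, c k = ∑ i, m i) (hcd : ∀ k, c k * d k ≤ β k) :
    ∃ k, (((if k = k₀ then d k₀ else 0 : ℕ) + 1 : ℤ) + β k - d k * (m k + 1)) ≠ 0 := by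
  by_contra h
  push_neg at h
  have hβ : ∀ k, (β k : ℤ) = d k * (m k + 1) - 1 - (if k = k₀ then (d k₀ : ℤ) else 0) := by
    intro k
    have := h k
    push_cast at this ⊢
    split_ifs with hk <;> split_ifs at this <;> linarith
  have hle : ∀ k, (c k : ℤ) ≤ m k - (if k = k₀ then 1 else 0) := by
    intro k
    have h1 : (c k : ℤ) * d k ≤ β k := by exact_mod_cast hcd k
    rw [hβ k] at h1
    have hdk : (1 : ℤ) ≤ d k := by exact_mod_cast hd k
    by_cases hk : k = k₀
    · subst hk
      simp only [eq_self_iff_true, if_true] at h1 ⊢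
      have : (c k : ℤ) * d k < (m k : ℤ) * d k := by linarith [mul_comm (d k : ℤ) (m k : ℤ)]
      have := lt_of_mul_lt_mul_right this (by linarith : (0:ℤ) ≤ d k)
      linarith
    · simp only [if_neg hk] at h1 ⊢
      have : (c k : ℤ) * d k < ((m k : ℤ) + 1) * d k := by
        have : (d k : ℤ) * ((m k : ℤ) + 1) = ((m k : ℤ) + 1) * d k := by ring
        linarith [this]
      have := lt_of_mul_lt_mul_right this (by linarith : (0:ℤ) ≤ d k)
      linarith
  have hsum : (∑ k, (c k : ℤ)) ≤ (∑ k, (m k : ℤ)) - 1 := by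
    calc (∑ k, (c k : ℤ)) ≤ ∑ k, ((m k : ℤ) - (if k = k₀ then 1 else 0)) :=
          Finset.sum_le_sum fun k _ => hle k
      _ = (∑ k, (m k : ℤ)) - ∑ k, (if k = k₀ then (1:ℤ) else 0) := by
          rw [Finset.sum_sub_distrib]
      _ = (∑ k, (m k : ℤ)) - 1 := by
          rw [Finset.sum_ite_eq' Finset.univ k₀ (fun _ => (1:ℤ))]; simp
  have heq : (∑ k, (c k : ℤ)) = ∑ i, (m i : ℤ) := by exact_mod_cast hc
  rw [heq] at hsum
  linarith


lemma prod_sub_prod_norm_le {ι : Type*} (s : Finset ι) (a b : ι → ℂ) (B ε : ℝ)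
    (hB : 1 ≤ B) (ha : ∀ i, ‖a i‖ ≤ B) (hb : ∀ i, ‖b i‖ ≤ B)
    (hab : ∀ i, ‖b i - a i‖ ≤ ε) :
    ‖∏ i ∈ s, b i - ∏ i ∈ s, a i‖ ≤ s.card * ε * B ^ s.card := by
  have hB0 : (0:ℝ) ≤ B := le_trans zero_le_one hB
  induction s using Finset.cons_induction with
  | empty => simp
  | cons x s hx ih =>
      have hε0 : 0 ≤ ε := le_trans (norm_nonneg _) (hab x)
      rw [Finset.prod_cons, Finset.prod_cons, Finset.card_cons]
      have hPa : ‖∏ i ∈ s, a i‖ ≤ B ^ s.card := by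
        rw [norm_prod]
        calc ∏ i ∈ s, ‖a i‖ ≤ ∏ i ∈ s, B :=
              Finset.prod_le_prod (fun i _ => norm_nonneg _) (fun i _ => ha i)
          _ = B ^ s.card := by rw [Finset.prod_const]
      have key : b x * ∏ i ∈ s, b i - a x * ∏ i ∈ s, a i
          = b x * (∏ i ∈ s, b i - ∏ i ∈ s, a i) + (b x - a x) * ∏ i ∈ s, a i := by ring
      rw [key]
      have h1 : ‖b x * (∏ i ∈ s, b i - ∏ i ∈ s, a i)‖ ≤ B * (s.card * ε * B ^ s.card) := by
        rw [norm_mul]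
        exact mul_le_mul (hb x) ih (norm_nonneg _) hB0
      have h2 : ‖(b x - a x) * ∏ i ∈ s, a i‖ ≤ ε * B ^ s.card := by
        rw [norm_mul]
        exact mul_le_mul (hab x) hPa (norm_nonneg _) hε0
      have hpow : B ^ s.card ≤ B ^ (s.card + 1) :=
        pow_le_pow_right₀ hB (Nat.le_succ _)
      calc ‖_ + _‖ ≤ ‖b x * (∏ i ∈ s, b i - ∏ i ∈ s, a i)‖ + ‖(b x - a x) * ∏ i ∈ s, a i‖ :=
            norm_add_le _ _
        _ ≤ B * (s.card * ε * B ^ s.card) + ε * B ^ s.card := add_le_add h1 h2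
        _ ≤ ((s.card : ℝ) + 1) * ε * B ^ (s.card + 1) := by
            have h3 : B * (s.card * ε * B ^ s.card) = (s.card : ℝ) * ε * B ^ (s.card+1) := by
              ring
            have h4 : ε * B ^ s.card ≤ ε * B ^ (s.card+1) :=
              mul_le_mul_of_nonneg_left hpow hε0
            have h5 : ((s.card : ℝ) * ε * B ^ (s.card+1)) + ε * B ^ (s.card+1)
                = ((s.card : ℝ) + 1) * ε * B ^ (s.card+1) := by ring
            linarith
        _ = ((s.card + 1 : ℕ) : ℝ) * ε * B ^ (s.card + 1) := by push_cast; ring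

lemma zpow_combine {z : ℂ} (hz : z ≠ 0) (e b p q : ℕ) :
    z ^ e * ((z ^ p)⁻¹) ^ q * z ^ b = z ^ ((e : ℤ) + b - p * q) := by
  rw [inv_pow, ← pow_mul, ← zpow_natCast z e, ← zpow_natCast z b, ← zpow_natCast z (p*q),
    ← zpow_neg, ← zpow_add₀ hz, ← zpow_add₀ hz]
  congr 1
  push_cast
  ring

lemma norm_one_sub_ge {w : ℂ} (hw : ‖w‖ ≤ 1/2) : (1:ℝ)/2 ≤ ‖1 - w‖ := by
  have := norm_sub_norm_le (1:ℂ) w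
  simp only [norm_one] at this
  linarith

lemma one_sub_ne_zero {w : ℂ} (hw : ‖w‖ ≤ 1/2) : (1:ℂ) - w ≠ 0 := by
  intro h
  have := norm_one_sub_ge hw
  rw [h, norm_zero] at this
  linarith

lemma norm_one_sub_inv_le {w : ℂ} (hw : ‖w‖ ≤ 1/2) : ‖(1 - w)⁻¹‖ ≤ 2 := by
  rw [norm_inv]
  have h := norm_one_sub_ge hw
  calc ‖1 - w‖⁻¹ ≤ ((1:ℝ)/2)⁻¹ := by
        apply inv_anti₀ (by norm_num) h
    _ = 2 := by norm_num

lemma geom_partial_norm_le {w : ℂ} (hw : ‖w‖ ≤ 1/2) (N : ℕ) :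
    ‖∑ m ∈ Finset.range N, w ^ m‖ ≤ 2 := by
  calc ‖∑ m ∈ Finset.range N, w ^ m‖ ≤ ∑ m ∈ Finset.range N, ‖w ^ m‖ := norm_sum_le _ _
    _ ≤ ∑ m ∈ Finset.range N, (1/2:ℝ) ^ m := by
        apply Finset.sum_le_sum
        intro m _
        rw [norm_pow]
        exact pow_le_pow_left₀ (norm_nonneg _) hw m
    _ ≤ 2 := by
        rw [geom_sum_eq (by norm_num : (1/2:ℝ) ≠ 1)]
        have : (0:ℝ) ≤ (1/2:ℝ)^N := by positivity
        have h2 : ((1/2:ℝ)^N - 1)/(1/2 - 1) = 2*(1 - (1/2)^N) := by ring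
        rw [h2]; linarith

lemma geom_tail {w : ℂ} (hw : ‖w‖ ≤ 1/2) (M : ℕ) :
    (1 - w)⁻¹ - ∑ m ∈ Finset.range (M+1), w ^ m = w ^ (M+1) * (1 - w)⁻¹ := by
  have h1 : (1:ℂ) - w ≠ 0 := one_sub_ne_zero hw
  have hgs := geom_sum_mul w (M+1)
  have h2 : (1 - w) * (∑ m ∈ Finset.range (M+1), w ^ m) = 1 - w^(M+1) := by
    linear_combination -hgs
  have h3 : (1-w)⁻¹ - ∑ m ∈ Finset.range (M+1), w ^ m
      = (1-w)⁻¹ * (1 - (1-w) * ∑ m ∈ Finset.range (M+1), w ^ m) := by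
    field_simp
  rw [h3, h2]
  ring

lemma torusPt_ne_zero {n : ℕ} (d : Fin n → ℕ) {r : ℝ} (hr : 0 < r) (θ : Fin n → ℝ)
    (k : Fin n) : torusPt d r θ k ≠ 0 := by
  unfold torusPt
  apply mul_ne_zero
  · simp only [ne_eq, Complex.ofReal_eq_zero]
    exact ne_of_gt (Real.rpow_pos_of_pos hr _)
  · exact Complex.exp_ne_zero _

lemma norm_torusPt {n : ℕ} (d : Fin n → ℕ) {r : ℝ} (hr : 0 ≤ r) (θ : Fin n → ℝ)
    (k : Fin n) : ‖torusPt d r θ k‖ = r ^ ((d k : ℝ)⁻¹) := by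
  unfold torusPt
  rw [norm_mul]
  have h1 : ‖((r ^ ((d k : ℝ)⁻¹) : ℝ) : ℂ)‖ = r ^ ((d k : ℝ)⁻¹) := by
    rw [Complex.norm_real, Real.norm_eq_abs, abs_of_nonneg (Real.rpow_nonneg hr _)]
  have h2 : ‖Complex.exp (Complex.I * θ k)‖ = 1 := by
    rw [Complex.norm_exp]
    simp
  rw [h1, h2, mul_one]

lemma torusPt_zpow {n : ℕ} (d : Fin n → ℕ) (r : ℝ) (θ : Fin n → ℝ) (k : Fin n) (a : ℤ) :
    torusPt d r θ k ^ a
      = ((r ^ ((d k : ℝ)⁻¹) : ℝ) : ℂ) ^ a * Complex.exp (Complex.I * a * θ k) := by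
  unfold torusPt
  rw [mul_zpow]
  congr 1
  rw [← Complex.exp_int_mul]
  congr 1
  push_cast
  ring


lemma integral_term_eq_zero {n : ℕ} (hn : 1 ≤ n) (d : Fin n → ℕ) (hd : ∀ k, 1 ≤ d k)
    {r : ℝ} (hr : 0 < r) (g : Fin n → MvPolynomial (Fin n) ℂ)
    (hg1 : ∀ i, ∀ β ∈ (g i).support, ∃ k, d k ≤ β k)
    (m : Fin n → ℕ) :
    ∫ θ : Fin n → ℝ in Set.Icc (0 : Fin n → ℝ) (fun _ => 2*π),
      ((torusPt d r θ ⟨0, hn⟩ ^ d ⟨0, hn⟩ * ∏ k, torusPt d r θ k) *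
        ∏ i, ((torusPt d r θ i ^ d i)⁻¹ *
          (-(MvPolynomial.eval (torusPt d r θ) (g i)) / (torusPt d r θ i ^ d i)) ^ m i)) = 0 := by
  classical
  set k₀ : Fin n := ⟨0, hn⟩
  set e : Fin n → ℕ := fun k => (if k = k₀ then d k₀ else 0) + 1 with he
  set G : MvPolynomial (Fin n) ℂ := ∏ i, (-(g i)) ^ (m i) with hG
  set ρ : Fin n → ℂ := fun k => ((r ^ ((d k : ℝ)⁻¹) : ℝ) : ℂ) with hρ
  set a : (Fin n →₀ ℕ) → Fin n → ℤ :=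
    fun β k => (e k : ℤ) + β k - d k * (m k + 1) with ha
  -- pointwise expansion of the integrand
  have hpt : ∀ θ : Fin n → ℝ,
      ((torusPt d r θ k₀ ^ d k₀ * ∏ k, torusPt d r θ k) *
        ∏ i, ((torusPt d r θ i ^ d i)⁻¹ *
          (-(MvPolynomial.eval (torusPt d r θ) (g i)) / (torusPt d r θ i ^ d i)) ^ m i))
      = ∑ β ∈ G.support, MvPolynomial.coeff β G *
          ∏ k, (ρ k ^ (a β k) * Complex.exp (Complex.I * (a β k) * θ k)) := by
    intro θ
    set z : Fin n → ℂ := torusPt d r θ with hzdef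
    have hz : ∀ k, z k ≠ 0 := fun k => torusPt_ne_zero d hr θ k
    -- A-part
    have hA : z k₀ ^ d k₀ * ∏ k, z k = ∏ k, z k ^ e k := by
      have h1 : ∀ k, z k ^ e k = (if k = k₀ then z k ^ d k₀ else 1) * z k := by
        intro k
        rw [he]
        simp only [pow_add, pow_one]
        split_ifs <;> simp
      simp_rw [h1]
      rw [Finset.prod_mul_distrib, Finset.prod_ite_eq' Finset.univ k₀ (fun k => z k ^ d k₀)]
      simp
    -- factor part
    have hfac : ∀ i, (z i ^ d i)⁻¹ *
        (-(MvPolynomial.eval z (g i)) / (z i ^ d i)) ^ m i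
        = ((z i ^ d i)⁻¹) ^ (m i + 1) * (-(MvPolynomial.eval z (g i))) ^ m i := by
      intro i
      rw [div_eq_mul_inv, mul_pow, pow_succ]
      ring
    have hevalG : ∏ i, (-(MvPolynomial.eval z (g i))) ^ m i = MvPolynomial.eval z G := by
      rw [hG, map_prod]
      exact Finset.prod_congr rfl fun i _ => by rw [map_pow, map_neg]
    have hterm : ∀ β : Fin n →₀ ℕ, ∀ k,
        z k ^ e k * ((z k ^ d k)⁻¹) ^ (m k + 1) * z k ^ (β k) = z k ^ (a β k) := by
      intro β k
      rw [zpow_combine (hz k) (e k) (β k) (d k) (m k + 1),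
        show ((e k : ℤ) + (β k : ℤ) - (d k : ℤ) * ((m k + 1 : ℕ) : ℤ)) = a β k from by
          simp only [ha]; push_cast; ring]
    calc (z k₀ ^ d k₀ * ∏ k, z k) *
          ∏ i, ((z i ^ d i)⁻¹ * (-(MvPolynomial.eval z (g i)) / (z i ^ d i)) ^ m i)
        = (∏ k, z k ^ e k) *
            ((∏ i, ((z i ^ d i)⁻¹) ^ (m i + 1)) * ∏ i, (-(MvPolynomial.eval z (g i))) ^ m i) := by
          rw [hA]
          congr 1
          rw [← Finset.prod_mul_distrib]
          exact Finset.prod_congr rfl fun i _ => hfac i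
      _ = (∏ k, z k ^ e k) * (∏ i, ((z i ^ d i)⁻¹) ^ (m i + 1)) * MvPolynomial.eval z G := by
          rw [hevalG]; ring
      _ = ∑ β ∈ G.support, MvPolynomial.coeff β G *
            ((∏ k, z k ^ e k) * (∏ k, ((z k ^ d k)⁻¹) ^ (m k + 1)) * ∏ k, z k ^ (β k)) := by
          rw [MvPolynomial.eval_eq', Finset.mul_sum]
          exact Finset.sum_congr rfl fun β _ => by ring
      _ = ∑ β ∈ G.support, MvPolynomial.coeff β G *
            ∏ k, (ρ k ^ (a β k) * Complex.exp (Complex.I * (a β k) * θ k)) := by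
          refine Finset.sum_congr rfl fun β _ => ?_
          congr 1
          have : (∏ k, z k ^ e k) * (∏ k, ((z k ^ d k)⁻¹) ^ (m k + 1)) * ∏ k, z k ^ (β k)
              = ∏ k, z k ^ (a β k) := by
            rw [← Finset.prod_mul_distrib, ← Finset.prod_mul_distrib]
            exact Finset.prod_congr rfl fun k _ => hterm β k
          rw [this]
          exact Finset.prod_congr rfl fun k _ => by rw [hzdef, torusPt_zpow]
  rw [MeasureTheory.integral_congr_ae (Filter.Eventually.of_forall fun θ => hpt θ)]
  -- swap integral and finite sum
  have hint : ∀ β ∈ G.support, IntegrableOn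
      (fun θ : Fin n → ℝ => MvPolynomial.coeff β G *
        ∏ k, (ρ k ^ (a β k) * Complex.exp (Complex.I * (a β k) * θ k)))
      (Set.Icc (0 : Fin n → ℝ) (fun _ => 2*π)) := by
    intro β _
    apply ContinuousOn.integrableOn_compact isCompact_Icc
    apply Continuous.continuousOn
    apply Continuous.mul continuous_const
    apply continuous_finset_prod
    intro k _
    exact continuous_const.mul (Complex.continuous_exp.comp
      (continuous_const.mul (Complex.continuous_ofReal.comp (continuous_apply k))))
  rw [MeasureTheory.integral_finset_sum _ hint]
  apply Finset.sum_eq_zero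
  intro β hβ
  obtain ⟨c, hc, hcd⟩ := good_prod g hg1 m β (by rwa [hG] at hβ)
  obtain ⟨k, hk⟩ := exists_exp_ne_zero k₀ d hd m β c hc hcd
  have hak : a β k ≠ 0 := by
    rw [ha]
    simp only [he]
    intro hcon
    apply hk
    push_cast at hcon ⊢
    split_ifs at hcon ⊢ <;> linarith
  rw [MeasureTheory.integral_const_mul,
    integral_prod_exp_eq_zero (a β) (fun k => ρ k ^ (a β k)) k hak, mul_zero]

end ResidueAux

open ResidueAux

/-- Vanishing of the residue `res_0 (z_1^{d_1}/(P_1 ⋯ P_n))` for `P_i = z_i^{d_i} + g_i`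
when every monomial `X^β` of every `g_i` has `δ`-weighted degree `Σ β_k/d_k > 1` and is
divisible by some `z_k^{d_k}`: for all small `r > 0` the `P_i` do not vanish on the torus
`{|z_k| = r^{1/d_k}}` and the corresponding torus integral is zero. -/
theorem residue_of_z1_pow_d1_vanishes (n : ℕ) (hn : 1 ≤ n)
    (d : Fin n → ℕ) (hd : ∀ k, 1 ≤ d k)
    (g : Fin n → MvPolynomial (Fin n) ℂ)
    (hg : ∀ i, ∀ β ∈ (g i).support,
      (1 : ℝ) < ∑ k : Fin n, (β k : ℝ) / (d k : ℝ) ∧ ∃ k, d k ≤ β k)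
    (P : Fin n → (Fin n → ℂ) → ℂ)
    (hP : ∀ i z, P i z = z i ^ d i + MvPolynomial.eval z (g i)) :
    ∃ r₀ > (0 : ℝ), ∀ r : ℝ, 0 < r → r < r₀ →
      (∀ θ : Fin n → ℝ, (∀ k, θ k ∈ Set.Icc (0 : ℝ) (2 * π)) →
        ∀ i, P i (torusPt d r θ) ≠ 0) ∧
      ∫ θ : Fin n → ℝ in Set.Icc (0 : Fin n → ℝ) (fun _ => 2 * π),
        (torusPt d r θ ⟨0, hn⟩ ^ d ⟨0, hn⟩ * ∏ k : Fin n, torusPt d r θ k) /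
          ∏ i : Fin n, P i (torusPt d r θ) = 0 := by
  classical
  set wdeg : (Fin n →₀ ℕ) → ℝ := fun β => ∑ k : Fin n, (β k : ℝ) / (d k : ℝ) with hwdeg
  set E : Finset (Fin n →₀ ℕ) := Finset.univ.biUnion (fun i => (g i).support) with hE
  have hEw : ∀ β ∈ E, 1 < wdeg β := by
    intro β hβ
    rw [hE, Finset.mem_biUnion] at hβ
    obtain ⟨i, _, hβi⟩ := hβ
    exact (hg i β hβi).1
  obtain ⟨ε, hε0, hε⟩ : ∃ ε > (0:ℝ), ∀ β ∈ E, 1 + ε ≤ wdeg β := by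
    rcases E.eq_empty_or_nonempty with h | h
    · exact ⟨1, one_pos, fun β hβ => by simp [h] at hβ⟩
    · obtain ⟨β₀, hβ₀, hmin⟩ := Finset.exists_min_image E wdeg h
      refine ⟨wdeg β₀ - 1, by linarith [hEw β₀ hβ₀], fun β hβ => by
        have := hmin β hβ; linarith⟩
  set C : ℝ := 1 + ∑ i : Fin n, ∑ β ∈ (g i).support, ‖MvPolynomial.coeff β (g i)‖ with hC
  have hC1 : 1 ≤ C := by
    rw [hC]
    have : (0:ℝ) ≤ ∑ i : Fin n, ∑ β ∈ (g i).support, ‖MvPolynomial.coeff β (g i)‖ :=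
      Finset.sum_nonneg fun i _ => Finset.sum_nonneg fun β _ => norm_nonneg _
    linarith
  have hC0 : (0:ℝ) < C := lt_of_lt_of_le one_pos hC1
  have hCi : ∀ i, ∑ β ∈ (g i).support, ‖MvPolynomial.coeff β (g i)‖ ≤ C := by
    intro i
    rw [hC]
    have h1 : ∑ β ∈ (g i).support, ‖MvPolynomial.coeff β (g i)‖
        ≤ ∑ i : Fin n, ∑ β ∈ (g i).support, ‖MvPolynomial.coeff β (g i)‖ :=
      Finset.single_le_sum (f := fun i => ∑ β ∈ (g i).support, ‖MvPolynomial.coeff β (g i)‖)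
        (fun i _ => Finset.sum_nonneg fun β _ => norm_nonneg _) (Finset.mem_univ i)
    linarith
  refine ⟨min 1 (((2*C)⁻¹) ^ ε⁻¹), lt_min one_pos (Real.rpow_pos_of_pos (by positivity) _), ?_⟩
  intro r hr hrlt
  have hr1 : r ≤ 1 := le_of_lt (lt_of_lt_of_le hrlt (min_le_left _ _))
  have hrε : r ^ ε ≤ (2*C)⁻¹ := by
    have h1 : r ^ ε ≤ (((2*C)⁻¹) ^ ε⁻¹) ^ ε :=
      Real.rpow_le_rpow hr.le (le_of_lt (lt_of_lt_of_le hrlt (min_le_right _ _))) hε0.le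
    rwa [← Real.rpow_mul (by positivity), inv_mul_cancel₀ (ne_of_gt hε0),
      Real.rpow_one] at h1
  -- norms of monomials
  have hmon : ∀ (θ : Fin n → ℝ) (β : Fin n →₀ ℕ),
      ‖∏ k : Fin n, torusPt d r θ k ^ (β k)‖ = r ^ (wdeg β) := by
    intro θ β
    rw [norm_prod]
    have h1 : ∀ k, ‖torusPt d r θ k ^ (β k)‖ = r ^ ((β k : ℝ) / (d k : ℝ)) := by
      intro k
      rw [norm_pow, norm_torusPt d hr.le θ k, ← Real.rpow_natCast (r ^ ((d k : ℝ)⁻¹)) (β k),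
        ← Real.rpow_mul hr.le]
      congr 1
      rw [div_eq_mul_inv]
      ring
    simp_rw [h1]
    rw [← Real.rpow_sum_of_pos hr]
  -- bound on the evaluations of the g i
  have hev : ∀ (i : Fin n) (θ : Fin n → ℝ),
      ‖MvPolynomial.eval (torusPt d r θ) (g i)‖ ≤ r/2 := by
    intro i θ
    rw [MvPolynomial.eval_eq']
    calc ‖∑ β ∈ (g i).support, MvPolynomial.coeff β (g i) * ∏ k, torusPt d r θ k ^ (β k)‖
        ≤ ∑ β ∈ (g i).support, ‖MvPolynomial.coeff β (g i) * ∏ k, torusPt d r θ k ^ (β k)‖ :=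
          norm_sum_le _ _
      _ ≤ ∑ β ∈ (g i).support, ‖MvPolynomial.coeff β (g i)‖ * r ^ ((1:ℝ) + ε) := by
          apply Finset.sum_le_sum
          intro β hβ
          rw [norm_mul, hmon θ β]
          apply mul_le_mul_of_nonneg_left _ (norm_nonneg _)
          apply Real.rpow_le_rpow_of_exponent_ge hr hr1
          exact hε β (by rw [hE, Finset.mem_biUnion]; exact ⟨i, Finset.mem_univ i, hβ⟩)
      _ = (∑ β ∈ (g i).support, ‖MvPolynomial.coeff β (g i)‖) * r ^ ((1:ℝ) + ε) := by
          rw [Finset.sum_mul]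
      _ ≤ C * (r * r ^ ε) := by
          rw [Real.rpow_add hr, Real.rpow_one]
          exact mul_le_mul_of_nonneg_right (hCi i) (by positivity)
      _ ≤ C * (r * (2*C)⁻¹) := by
          apply mul_le_mul_of_nonneg_left _ hC0.le
          exact mul_le_mul_of_nonneg_left hrε hr.le
      _ = r/2 := by field_simp
  -- the power z_i^{d_i} has norm r
  have hzd : ∀ (θ : Fin n → ℝ) (i : Fin n), ‖torusPt d r θ i ^ d i‖ = r := by
    intro θ i
    rw [norm_pow, norm_torusPt d hr.le θ i, ← Real.rpow_natCast (r ^ ((d i : ℝ)⁻¹)) (d i),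
      ← Real.rpow_mul hr.le, inv_mul_cancel₀ (by
        have := hd i
        exact_mod_cast (Nat.pos_of_ne_zero (by omega)).ne'), Real.rpow_one]
  -- lower bound for P i on the torus
  have hPlow : ∀ (θ : Fin n → ℝ) (i : Fin n), r/2 ≤ ‖P i (torusPt d r θ)‖ := by
    intro θ i
    rw [hP]
    have h1 := norm_sub_norm_le (torusPt d r θ i ^ d i)
      (-(MvPolynomial.eval (torusPt d r θ) (g i)))
    rw [sub_neg_eq_add, norm_neg, hzd θ i] at h1
    have h2 := hev i θ
    linarith
  have hPne : ∀ (θ : Fin n → ℝ) (i : Fin n), P i (torusPt d r θ) ≠ 0 := by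
    intro θ i h
    have := hPlow θ i
    rw [h, norm_zero] at this
    linarith
  refine ⟨fun θ _ i => hPne θ i, ?_⟩
  -- abbreviations
  set cube : Set (Fin n → ℝ) := Set.Icc (0 : Fin n → ℝ) (fun _ => 2 * π) with hcubedef
  set f : (Fin n → ℝ) → ℂ := fun θ =>
    (torusPt d r θ ⟨0, hn⟩ ^ d ⟨0, hn⟩ * ∏ k : Fin n, torusPt d r θ k) /
      ∏ i : Fin n, P i (torusPt d r θ) with hfdef
  set w' : Fin n → (Fin n → ℝ) → ℂ := fun i θ =>
    -(MvPolynomial.eval (torusPt d r θ) (g i)) / (torusPt d r θ i ^ d i) with hw'def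
  set S : ℕ → (Fin n → ℝ) → ℂ := fun M θ =>
    (torusPt d r θ ⟨0, hn⟩ ^ d ⟨0, hn⟩ * ∏ k : Fin n, torusPt d r θ k) *
      ∏ i : Fin n, ((torusPt d r θ i ^ d i)⁻¹ *
        ∑ m ∈ Finset.range (M+1), (w' i θ) ^ m) with hSdef
  have hzne : ∀ (θ : Fin n → ℝ) k, torusPt d r θ k ≠ 0 := fun θ k => torusPt_ne_zero d hr θ k
  have hzdne : ∀ (θ : Fin n → ℝ) i, torusPt d r θ i ^ d i ≠ 0 :=
    fun θ i => pow_ne_zero _ (hzne θ i)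
  have hw : ∀ i (θ : Fin n → ℝ), ‖w' i θ‖ ≤ 1/2 := by
    intro i θ
    rw [hw'def]
    simp only [norm_div, norm_neg]
    rw [hzd θ i]
    rw [div_le_iff₀ hr]
    have := hev i θ
    linarith
  have hPfac : ∀ i (θ : Fin n → ℝ),
      P i (torusPt d r θ) = (torusPt d r θ i ^ d i) * (1 - w' i θ) := by
    intro i θ
    rw [hP, hw'def]
    have hne := hzdne θ i
    field_simp
    ring
  -- continuity
  have hzc : ∀ k, Continuous fun θ : Fin n → ℝ => torusPt d r θ k := by
    intro k
    exact continuous_const.mul (Complex.continuous_exp.comp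
      (continuous_const.mul (Complex.continuous_ofReal.comp (continuous_apply k))))
  have hZc : Continuous fun θ : Fin n → ℝ => torusPt d r θ := continuous_pi hzc
  have hevc : ∀ i, Continuous fun θ : Fin n → ℝ =>
      MvPolynomial.eval (torusPt d r θ) (g i) :=
    fun i => (MvPolynomial.continuous_eval (p := g i)).comp hZc
  have hzdc : ∀ i, Continuous fun θ : Fin n → ℝ => torusPt d r θ i ^ d i :=
    fun i => (hzc i).pow _
  have hw'c : ∀ i, Continuous (w' i) := by
    intro i
    rw [hw'def]
    exact ((hevc i).neg).div (hzdc i) (fun θ => hzdne θ i)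
  have hAc : Continuous fun θ : Fin n → ℝ =>
      torusPt d r θ ⟨0, hn⟩ ^ d ⟨0, hn⟩ * ∏ k : Fin n, torusPt d r θ k :=
    ((hzc _).pow _).mul (continuous_finset_prod _ fun k _ => hzc k)
  have hPc : ∀ i, Continuous fun θ : Fin n → ℝ => P i (torusPt d r θ) := by
    intro i
    have heq : (fun θ : Fin n → ℝ => P i (torusPt d r θ))
        = fun θ => torusPt d r θ i ^ d i + MvPolynomial.eval (torusPt d r θ) (g i) :=
      funext fun θ => hP i _
    rw [heq]
    exact (hzdc i).add (hevc i)
  have hfc : Continuous f := by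
    rw [hfdef]
    exact Continuous.div hAc (continuous_finset_prod _ fun i _ => hPc i)
      (fun θ => Finset.prod_ne_zero_iff.mpr fun i _ => hPne θ i)
  have hSc : ∀ M, Continuous (S M) := by
    intro M
    rw [hSdef]
    exact hAc.mul (continuous_finset_prod _ fun i _ =>
      (((hzdc i).inv₀ (fun θ => hzdne θ i)).mul
        (continuous_finset_sum _ fun m _ => (hw'c i).pow m)))
  have hcube : IsCompact cube := isCompact_Icc
  have hvol : volume cube < ⊤ := hcube.measure_lt_top
  -- the truncated integral vanishes
  have hSzero : ∀ M, ∫ θ in cube, S M θ = 0 := by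
    intro M
    have hexp : ∀ θ : Fin n → ℝ, S M θ =
        ∑ m ∈ Fintype.piFinset (fun _ : Fin n => Finset.range (M+1)),
          ((torusPt d r θ ⟨0, hn⟩ ^ d ⟨0, hn⟩ * ∏ k : Fin n, torusPt d r θ k) *
            ∏ i : Fin n, ((torusPt d r θ i ^ d i)⁻¹ * (w' i θ) ^ (m i))) := by
      intro θ
      rw [hSdef]
      have h1 : ∀ i : Fin n, (torusPt d r θ i ^ d i)⁻¹ *
          ∑ m ∈ Finset.range (M+1), (w' i θ) ^ m
          = ∑ m ∈ Finset.range (M+1), (torusPt d r θ i ^ d i)⁻¹ * (w' i θ) ^ m :=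
        fun i => Finset.mul_sum _ _ _
      simp only [h1]
      rw [Finset.prod_univ_sum, Finset.mul_sum]
    rw [MeasureTheory.integral_congr_ae (Filter.Eventually.of_forall hexp)]
    rw [MeasureTheory.integral_finset_sum]
    · apply Finset.sum_eq_zero
      intro m _
      have := integral_term_eq_zero hn d hd hr g (fun i β hβ => (hg i β hβ).2) m
      rw [hcubedef, hw'def]
      exact this
    · intro m _
      apply ContinuousOn.integrableOn_compact hcube
      apply Continuous.continuousOn
      exact hAc.mul (continuous_finset_prod _ fun i _ =>
        (((hzdc i).inv₀ (fun θ => hzdne θ i)).mul ((hw'c i).pow (m i))))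
  -- pointwise error bound
  have hone_le_B : (1:ℝ) ≤ 2/r := by
    rw [le_div_iff₀ hr]; linarith
  have hA1 : ∀ θ : Fin n → ℝ,
      ‖torusPt d r θ ⟨0, hn⟩ ^ d ⟨0, hn⟩ * ∏ k : Fin n, torusPt d r θ k‖ ≤ 1 := by
    intro θ
    have hρ1 : ∀ k, ‖torusPt d r θ k‖ ≤ 1 := by
      intro k
      rw [norm_torusPt d hr.le θ k]
      exact Real.rpow_le_one hr.le hr1 (by positivity)
    rw [norm_mul, norm_pow, norm_prod]
    have h1 : ‖torusPt d r θ ⟨0, hn⟩‖ ^ d ⟨0, hn⟩ ≤ 1 :=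
      pow_le_one₀ (norm_nonneg _) (hρ1 _)
    have h2 : ∏ k : Fin n, ‖torusPt d r θ k‖ ≤ 1 :=
      Finset.prod_le_one (fun k _ => norm_nonneg _) (fun k _ => hρ1 k)
    have h3 : (0:ℝ) ≤ ∏ k : Fin n, ‖torusPt d r θ k‖ :=
      Finset.prod_nonneg fun k _ => norm_nonneg _
    nlinarith [pow_nonneg (norm_nonneg (torusPt d r θ ⟨0, hn⟩)) (d ⟨0, hn⟩)]
  have hdiff : ∀ (M : ℕ) (θ : Fin n → ℝ),
      ‖f θ - S M θ‖ ≤ (n:ℝ) * (r⁻¹ * (1/2)^M) * (2/r)^n := by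
    intro M θ
    have hb : ∀ i, ‖(P i (torusPt d r θ))⁻¹‖ ≤ 2/r := by
      intro i
      rw [hPfac i θ, mul_inv, norm_mul, norm_inv, hzd θ i]
      calc r⁻¹ * ‖(1 - w' i θ)⁻¹‖ ≤ r⁻¹ * 2 :=
            mul_le_mul_of_nonneg_left (norm_one_sub_inv_le (hw i θ)) (inv_nonneg.mpr hr.le)
        _ = 2/r := by rw [div_eq_mul_inv]; ring
    have ha : ∀ i, ‖(torusPt d r θ i ^ d i)⁻¹ *
        ∑ m ∈ Finset.range (M+1), (w' i θ) ^ m‖ ≤ 2/r := by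
      intro i
      rw [norm_mul, norm_inv, hzd θ i]
      calc r⁻¹ * ‖∑ m ∈ Finset.range (M+1), (w' i θ) ^ m‖ ≤ r⁻¹ * 2 :=
            mul_le_mul_of_nonneg_left (geom_partial_norm_le (hw i θ) (M+1))
              (inv_nonneg.mpr hr.le)
        _ = 2/r := by rw [div_eq_mul_inv]; ring
    have hba : ∀ i, ‖(P i (torusPt d r θ))⁻¹ - (torusPt d r θ i ^ d i)⁻¹ *
        ∑ m ∈ Finset.range (M+1), (w' i θ) ^ m‖ ≤ r⁻¹ * (1/2)^M := by
      intro i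
      rw [hPfac i θ, mul_inv, ← mul_sub, norm_mul, norm_inv, hzd θ i,
        geom_tail (hw i θ) M, norm_mul, norm_pow]
      have h1 : ‖w' i θ‖ ^ (M+1) ≤ (1/2:ℝ) ^ (M+1) :=
        pow_le_pow_left₀ (norm_nonneg _) (hw i θ) _
      have h2 : ‖(1 - w' i θ)⁻¹‖ ≤ 2 := norm_one_sub_inv_le (hw i θ)
      calc r⁻¹ * (‖w' i θ‖ ^ (M+1) * ‖(1 - w' i θ)⁻¹‖)
          ≤ r⁻¹ * ((1/2:ℝ)^(M+1) * 2) := by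
            apply mul_le_mul_of_nonneg_left _ (inv_nonneg.mpr hr.le)
            exact mul_le_mul h1 h2 (norm_nonneg _) (by positivity)
        _ = r⁻¹ * (1/2)^M := by ring
    have hfS : f θ - S M θ =
        (torusPt d r θ ⟨0, hn⟩ ^ d ⟨0, hn⟩ * ∏ k : Fin n, torusPt d r θ k) *
          (∏ i : Fin n, (P i (torusPt d r θ))⁻¹ -
           ∏ i : Fin n, ((torusPt d r θ i ^ d i)⁻¹ *
             ∑ m ∈ Finset.range (M+1), (w' i θ) ^ m)) := by
      rw [hfdef, hSdef]
      simp only [div_eq_mul_inv]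
      rw [← Finset.prod_inv_distrib]
      ring
    rw [hfS, norm_mul]
    have hprod := prod_sub_prod_norm_le Finset.univ
      (fun i => (torusPt d r θ i ^ d i)⁻¹ * ∑ m ∈ Finset.range (M+1), (w' i θ) ^ m)
      (fun i => (P i (torusPt d r θ))⁻¹) (2/r) (r⁻¹ * (1/2)^M) hone_le_B ha hb hba
    rw [Finset.card_univ, Fintype.card_fin] at hprod
    calc ‖torusPt d r θ ⟨0, hn⟩ ^ d ⟨0, hn⟩ * ∏ k : Fin n, torusPt d r θ k‖ *
          ‖∏ i : Fin n, (P i (torusPt d r θ))⁻¹ -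
           ∏ i : Fin n, ((torusPt d r θ i ^ d i)⁻¹ *
             ∑ m ∈ Finset.range (M+1), (w' i θ) ^ m)‖
        ≤ 1 * ((n:ℝ) * (r⁻¹ * (1/2)^M) * (2/r)^n) :=
          mul_le_mul (hA1 θ) hprod (norm_nonneg _) one_pos.le
      _ = (n:ℝ) * (r⁻¹ * (1/2)^M) * (2/r)^n := one_mul _
  -- integrability
  have hfint : IntegrableOn f cube := hfc.continuousOn.integrableOn_compact hcube
  have hSint : ∀ M, IntegrableOn (S M) cube :=
    fun M => (hSc M).continuousOn.integrableOn_compact hcube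
  -- key bound
  have hkey : ∀ M : ℕ, ‖∫ θ in cube, f θ‖ ≤
      ((n:ℝ) * (r⁻¹ * (1/2)^M) * (2/r)^n) * (volume cube).toReal := by
    intro M
    have h1 : ∫ θ in cube, f θ = ∫ θ in cube, (f θ - S M θ) := by
      rw [MeasureTheory.integral_sub hfint (hSint M), hSzero M, sub_zero]
    rw [h1]
    exact norm_setIntegral_le_of_norm_le_const hvol (fun θ _ => hdiff M θ)
  -- conclude by letting M → ∞
  have hlim : Filter.Tendsto
      (fun M : ℕ => ((n:ℝ) * (r⁻¹ * (1/2)^M) * (2/r)^n) * (volume cube).toReal)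
      Filter.atTop (nhds 0) := by
    have heq : (fun M : ℕ => ((n:ℝ) * (r⁻¹ * (1/2)^M) * (2/r)^n) * (volume cube).toReal)
        = fun M : ℕ => ((n:ℝ) * r⁻¹ * (2/r)^n * (volume cube).toReal) * (1/2)^M := by
      funext M; ring
    rw [heq]
    have h2 := tendsto_pow_atTop_nhds_zero_of_lt_one
      (by norm_num : (0:ℝ) ≤ 1/2) (by norm_num : (1/2:ℝ) < 1)
    simpa using h2.const_mul ((n:ℝ) * r⁻¹ * (2/r)^n * (volume cube).toReal)
  have hnorm0 : ‖∫ θ in cube, f θ‖ ≤ 0 :=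
    ge_of_tendsto hlim (Filter.Eventually.of_forall hkey)
  exact norm_le_zero_iff.mp hnorm0
end
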